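/- Let R be a finite commutative local ring of odd characteristic in which -1 is not a square of a unit, and let z be a unit of R that is not a square of a unit. Then the 2×2 identity matrix I₂ is cogredient to the diagonal matrix diag(1, -z) over R. -/

import Mathlib

/-!
Since `2` is a unit of the local ring `R`, the only square roots of `1` in `Rˣ` are `±1`, and these
are distinct because `-1` is not a square. So squaring on the finite group `Rˣ` has a kernel of
order `2`, the squares form a subgroup of index `2`, and the product `-z` of the two non-squares
`-1` and `z` is a square `a ^ 2`. Then `P = diag(1, a)` gives `P * I₂ * Pᵀ = diag(1, -z)`.
-/

/-- Two square matrices are cogredient if `P * S1 * P.transpose = S2` for some invertible `P`. -/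
def Cogredient {R : Type*} [CommRing R] {n : Type*} [Fintype n] [DecidableEq n]
    (S1 S2 : Matrix n n R) : Prop :=
  ∃ P : Matrix n n R, IsUnit P.det ∧ P * S1 * P.transpose = S2

/-- Block diagonal sum `A ⊕ B` of square matrices. -/
def matOplus {R : Type*} [CommRing R] {a b : ℕ}
    (A : Matrix (Fin a) (Fin a) R) (B : Matrix (Fin b) (Fin b) R) :
    Matrix (Fin (a + b)) (Fin (a + b)) R :=
  (Matrix.reindex finSumFinEquiv finSumFinEquiv) (Matrix.fromBlocks A 0 0 B)

/-- The hyperbolic matrix `H_{2ν} = [[0, I_ν], [I_ν, 0]]`. -/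
def hypMat (R : Type*) [CommRing R] (ν : ℕ) : Matrix (Fin (ν + ν)) (Fin (ν + ν)) R :=
  (Matrix.reindex finSumFinEquiv finSumFinEquiv)
    (Matrix.fromBlocks (0 : Matrix (Fin ν) (Fin ν) R) 1 1 0)

lemma isUnit_two_of_odd_ringChar {R : Type*} [CommRing R] (hchar : Odd (ringChar R)) :
    IsUnit (2 : R) := by
  obtain ⟨k, hk⟩ := hchar
  have hchar_zero : ((2 * k + 1 : ℕ) : R) = 0 := hk ▸ CharP.cast_eq_zero R (ringChar R)
  push_cast at hchar_zero
  exact .of_mul_eq_one ((k : R) + 1) (by linear_combination hchar_zero)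

lemma IsLocalRing.sq_eq_one_iff_of_isUnit_two {R : Type*} [CommRing R] [IsLocalRing R]
    (h2 : IsUnit (2 : R)) {x : R} : x ^ 2 = 1 ↔ x = 1 ∨ x = -1 := by
  refine ⟨fun hx => ?_, by rintro (rfl | rfl) <;> ring⟩
  -- `(x - 1) (x + 1) = 0`, and one of `x + 1`, `1 - x` is a unit since they sum to `2`.
  have hsum : IsUnit ((x + 1) + (1 - x)) := by ring_nf; exact h2
  rcases IsLocalRing.isUnit_or_isUnit_of_isUnit_add hsum with h | h
  · left
    have : (x - 1) * (x + 1) = 0 * (x + 1) := by linear_combination hx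
    linear_combination h.mul_right_cancel this
  · right
    have : (1 - x) * (x + 1) = (1 - x) * 0 := by linear_combination -hx
    linear_combination h.mul_left_cancel this

lemma IsLocalRing.card_ker_powMonoidHom_two_units {R : Type*} [CommRing R] [IsLocalRing R]
    (h2 : IsUnit (2 : R)) (hne : (-1 : Rˣ) ≠ 1) :
    Nat.card (powMonoidHom 2 : Rˣ →* Rˣ).ker = 2 := by
  have hker : ((powMonoidHom 2 : Rˣ →* Rˣ).ker : Set Rˣ) = {1, -1} := by
    ext x
    simp only [SetLike.mem_coe, MonoidHom.mem_ker, powMonoidHom_apply, Set.mem_insert_iff,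
      Set.mem_singleton_iff, Units.ext_iff, Units.val_pow_eq_pow_val, Units.val_one,
      Units.val_neg, IsLocalRing.sq_eq_one_iff_of_isUnit_two h2]
  rw [← SetLike.coe_sort_coe, Nat.card_coe_set_eq, hker, Set.ncard_pair hne.symm]

lemma isSquare_mul_of_card_ker_powMonoidHom_two {G : Type*} [CommGroup G] [Finite G]
    (hker : Nat.card (powMonoidHom 2 : G →* G).ker = 2) {x y : G}
    (hx : ¬IsSquare x) (hy : ¬IsSquare y) : IsSquare (x * y) := by
  have hsq : ∀ g : G, IsSquare g ↔ g ∈ (powMonoidHom 2 : G →* G).range := fun g => by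
    simp [isSquare_iff_exists_sq, eq_comm]
  have hindex : (powMonoidHom 2 : G →* G).range.index = 2 := by
    rw [Subgroup.index_range, hker]
  simp only [hsq] at hx hy ⊢
  simp [Subgroup.mul_mem_iff_of_index_two hindex, hx, hy]

lemma cogredient_diagonal_sq_mul {R : Type*} [CommRing R] {n : Type*} [Fintype n]
    [DecidableEq n] (d : n → R) (u : n → Rˣ) :
    Cogredient (Matrix.diagonal d) (Matrix.diagonal fun i => (u i : R) ^ 2 * d i) := by
  refine ⟨Matrix.diagonal fun i => (u i : R), ?_, ?_⟩
  · rw [Matrix.det_diagonal]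
    simp
  · rw [Matrix.diagonal_transpose, Matrix.diagonal_mul_diagonal, Matrix.diagonal_mul_diagonal]
    congr 1
    ext i
    ring

/-- if -1 is not a square of a unit and z is a non-square unit, then `I₂`
is cogredient to `diag(1, -z)`. -/
theorem stmt_14 (R : Type*) [CommRing R] [IsLocalRing R] [Fintype R]
    (hchar : Odd (ringChar R)) (hm1 : ∀ a : Rˣ, (-1 : R) ≠ (a : R) ^ 2)
    (z : Rˣ) (hz : ∀ a : Rˣ, z ≠ a ^ 2) :
    Cogredient (1 : Matrix (Fin 2) (Fin 2) R)
      (Matrix.diagonal ![(1 : R), -(z : R)]) := by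
  have hm1 : ¬IsSquare (-1 : Rˣ) := by
    simpa [isSquare_iff_exists_sq, Units.ext_iff] using hm1
  have hz : ¬IsSquare z := by simpa [isSquare_iff_exists_sq] using hz
  have hne : (-1 : Rˣ) ≠ 1 := fun h => hm1 (by rw [h]; exact IsSquare.one)
  have hker := IsLocalRing.card_ker_powMonoidHom_two_units (isUnit_two_of_odd_ringChar hchar) hne
  obtain ⟨a, ha⟩ := (isSquare_mul_of_card_ker_powMonoidHom_two hker hm1 hz).exists_sq
  convert cogredient_diagonal_sq_mul 1 ![1, a] using 2
  · exact Matrix.diagonal_one.symm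
  · ext i
    fin_cases i
    · simp
    · simpa [Units.ext_iff] using ha
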